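/- arXiv:1101.2917 — 9 statements merged into one kernel-verified Lean document; each statement's English description precedes it below -/
import Mathlib

section
/- An acute Euclidean angle φ in standard position (vertex at origin, initial side the positive x-axis, with 0 < φ < π/2) has taxicab measure θ = 2 - 2/(1 + tan φ) = 2 sin φ / (sin φ + cos φ). -/
open Real

/-- An acute Euclidean angle φ in standard position has taxicab measure
2 - 2/(1 + tan φ) = 2 sin φ/(sin φ + cos φ), the taxicab measure being the
taxicab distance from (1,0) to the intersection P of y = x·tan φ with
y = -x + 1. -/
theorem taxicab_measure_acute_standard (φ : ℝ) (hφ0 : 0 < φ) (hφ : φ < π / 2)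
    (P : ℝ × ℝ) (hP1 : P.2 = P.1 * tan φ) (hP2 : P.2 = -P.1 + 1) :
    |P.1 - 1| + |P.2 - 0| = 2 - 2 / (1 + tan φ) ∧
    2 - 2 / (1 + tan φ) = 2 * sin φ / (sin φ + cos φ) := by
  have hs : 0 < sin φ := sin_pos_of_pos_of_lt_pi hφ0 (hφ.trans (by linarith [pi_pos]))
  have hc : 0 < cos φ := cos_pos_of_mem_Ioo ⟨by linarith [pi_pos], hφ⟩
  have ht : 0 < tan φ := tan_pos_of_pos_of_lt_pi_div_two hφ0 hφ
  have h1t : 0 < 1 + tan φ := by linarith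
  have hx : P.1 * (1 + tan φ) = 1 := by
    have := hP1.symm.trans hP2
    ring_nf
    ring_nf at this
    linarith
  have hx1 : P.1 = 1 / (1 + tan φ) := by
    field_simp
    linarith [hx]
  have hx0 : 0 < P.1 := by
    rw [hx1]; positivity
  have hx1' : P.1 ≤ 1 := by
    rw [hx1]
    rw [div_le_one h1t]; linarith
  have hy : P.2 = tan φ / (1 + tan φ) := by
    rw [hP1, hx1]; ring
  constructor
  · rw [abs_of_nonpos (by linarith), sub_zero, abs_of_nonneg (by rw [hy]; positivity),
      hy, hx1]
    field_simp
    ring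
  · rw [tan_eq_sin_div_cos]
    have hsc : 0 < sin φ + cos φ := by linarith
    field_simp
    ring
end

section
/- If an acute Euclidean angle φ has Euclidean reference angle ψ (so the angle spans from ψ to φ+ψ measured from the x-axis) and lies entirely in the first quadrant (0 ≤ ψ < ψ+φ ≤ π/2), then its taxicab measure is θ = 2/(1+tan ψ) - 2/(1+tan(φ+ψ)) = 2 sin φ / ((cos(φ+ψ) + sin(φ+ψ))(cos ψ + sin ψ)). -/
open Real

/-!
Both rays meet the line `x + y = 1` at `(cos α, sin α) / (cos α + sin α)`. For two such points the
differences of coordinates are `∓ sin (β - α) / ((cos β + sin β) (cos α + sin α))`, the cross product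
of the direction vectors over the product of the normalising factors, so the taxicab distance is twice
that quotient. The tangent form follows from `1 / (1 + tan α) = cos α / (cos α + sin α)`.
-/

theorem sqrt_two_mul_sin_add_pi_div_four (α : ℝ) : √2 * sin (α + π / 4) = cos α + sin α := by
  have hsq : √2 * √2 = 2 := mul_self_sqrt zero_le_two
  rw [sin_add, cos_pi_div_four, sin_pi_div_four]
  linear_combination (sin α + cos α) / 2 * hsq

theorem cos_add_sin_pos {α : ℝ} (h₁ : -(π / 4) < α) (h₂ : α < 3 * π / 4) :
    0 < cos α + sin α := by
  rw [← sqrt_two_mul_sin_add_pi_div_four]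
  exact mul_pos (by positivity) (sin_pos_of_pos_of_lt_pi (by linarith) (by linarith))

theorem cos_div_cos_add_sin_sub (α β : ℝ) (hα : cos α + sin α ≠ 0) (hβ : cos β + sin β ≠ 0) :
    cos β / (cos β + sin β) - cos α / (cos α + sin α)
      = -sin (β - α) / ((cos β + sin β) * (cos α + sin α)) := by
  rw [sin_sub]
  field_simp
  ring

theorem sin_div_cos_add_sin_sub (α β : ℝ) (hα : cos α + sin α ≠ 0) (hβ : cos β + sin β ≠ 0) :
    sin β / (cos β + sin β) - sin α / (cos α + sin α)
      = sin (β - α) / ((cos β + sin β) * (cos α + sin α)) := by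
  rw [sin_sub]
  field_simp
  ring

theorem inv_one_add_tan {α : ℝ} (hα : cos α ≠ 0) : (1 + tan α)⁻¹ = cos α / (cos α + sin α) := by
  rw [tan_eq_sin_div_cos, ← div_self hα, ← add_div, inv_div]

/-- An acute Euclidean angle φ with reference angle ψ, lying entirely in the
first quadrant, has taxicab measure
2/(1+tan ψ) - 2/(1+tan(φ+ψ)) = 2 sin φ/((cos(φ+ψ)+sin(φ+ψ))(cos ψ+sin ψ)).
The taxicab measure is the taxicab distance between the points where the rays
at Euclidean angles ψ and φ+ψ meet the line x + y = 1. -/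
theorem taxicab_measure_acute_in_quadrant (φ ψ : ℝ) (hψ : 0 ≤ ψ) (hφ : 0 < φ)
    (h : ψ + φ ≤ π / 2)
    (P Q : ℝ × ℝ)
    (hP : P = (cos ψ / (cos ψ + sin ψ), sin ψ / (cos ψ + sin ψ)))
    (hQ : Q = (cos (φ + ψ) / (cos (φ + ψ) + sin (φ + ψ)),
               sin (φ + ψ) / (cos (φ + ψ) + sin (φ + ψ)))) :
    |Q.1 - P.1| + |Q.2 - P.2|
      = 2 * sin φ / ((cos (φ + ψ) + sin (φ + ψ)) * (cos ψ + sin ψ)) ∧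
    (ψ + φ < π / 2 →
      |Q.1 - P.1| + |Q.2 - P.2|
        = 2 / (1 + tan ψ) - 2 / (1 + tan (φ + ψ))) := by
  have hA : 0 < cos ψ + sin ψ := cos_add_sin_pos (by linarith [pi_pos]) (by linarith [pi_pos])
  have hB : 0 < cos (φ + ψ) + sin (φ + ψ) :=
    cos_add_sin_pos (by linarith [pi_pos]) (by linarith [pi_pos])
  have hdx := cos_div_cos_add_sin_sub ψ (φ + ψ) hA.ne' hB.ne'
  have hdy := sin_div_cos_add_sin_sub ψ (φ + ψ) hA.ne' hB.ne'
  rw [add_sub_cancel_right] at hdx hdy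
  have hd : 0 ≤ sin φ / ((cos (φ + ψ) + sin (φ + ψ)) * (cos ψ + sin ψ)) :=
    div_nonneg (sin_nonneg_of_nonneg_of_le_pi hφ.le (by linarith [pi_pos])) (by positivity)
  have hdist : |Q.1 - P.1| + |Q.2 - P.2|
      = 2 * sin φ / ((cos (φ + ψ) + sin (φ + ψ)) * (cos ψ + sin ψ)) := by
    rw [hP, hQ, hdx, hdy, neg_div, abs_neg, abs_of_nonneg hd]
    ring
  refine ⟨hdist, fun hlt => ?_⟩
  have hcψ : cos ψ ≠ 0 := (cos_pos_of_mem_Ioo ⟨by linarith [pi_pos], by linarith⟩).ne'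
  have hcφψ : cos (φ + ψ) ≠ 0 := (cos_pos_of_mem_Ioo ⟨by linarith [pi_pos], by linarith⟩).ne'
  rw [hdist, div_eq_mul_inv 2, div_eq_mul_inv 2, inv_one_add_tan hcψ, inv_one_add_tan hcφψ]
  linear_combination 2 * hdx
end

section
/- If α and β are taxicab angles both in quadrant II, i.e., α, β ∈ [2,4), then cos_t(α + β) = -1 + |cos_t α + cos_t β|. -/
/-- Taxicab sine/cosine: reduce mod 8. -/
noncomputable def tmod (θ : ℝ) : ℝ := θ - 8 * (⌊θ / 8⌋ : ℤ)

/-- Taxicab cosine, piecewise linear on [0,8), 8-periodic. -/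
noncomputable def tcos (θ : ℝ) : ℝ :=
  if tmod θ < 4 then 1 - tmod θ / 2 else -3 + tmod θ / 2

/-- Taxicab sine, piecewise linear on [0,8), 8-periodic. -/
noncomputable def tsin (θ : ℝ) : ℝ :=
  if tmod θ < 2 then tmod θ / 2
  else if tmod θ < 6 then 2 - tmod θ / 2
  else -4 + tmod θ / 2

lemma tmod_eq (θ : ℝ) (h0 : 0 ≤ θ) (h8 : θ < 8) : tmod θ = θ := by
  unfold tmod
  have : ⌊θ / 8⌋ = 0 := by
    rw [Int.floor_eq_zero_iff, Set.mem_Ico]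
    constructor <;> nlinarith
  rw [this]; ring

/-- Cosine addition formula when α and β are both in quadrant II. -/
theorem taxicab_cos_add_II_II (α β : ℝ) (hα : α ∈ Set.Ico (2 : ℝ) 4)
    (hβ : β ∈ Set.Ico (2 : ℝ) 4) :
    tcos (α + β) = -1 + |tcos α + tcos β| := by
  obtain ⟨ha1, ha2⟩ := hα
  obtain ⟨hb1, hb2⟩ := hβ
  unfold tcos
  rw [tmod_eq α (by linarith) (by linarith), tmod_eq β (by linarith) (by linarith),
    tmod_eq (α+β) (by linarith) (by linarith)]
  rw [if_neg (by push_neg; linarith), if_pos (by linarith), if_pos (by linarith)]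
  rw [abs_of_nonpos (by linarith)]
  ring
end

section
/- If α is a taxicab angle in quadrant II and β is a taxicab angle in quadrant III, i.e., α ∈ [2,4) and β ∈ [4,6), then cos_t(α + β) = 1 - |cos_t α - cos_t β|. -/
lemma tmod_eq_self {θ : ℝ} (h0 : 0 ≤ θ) (h8 : θ < 8) : tmod θ = θ := by
  unfold tmod
  have : ⌊θ / 8⌋ = 0 := by
    rw [Int.floor_eq_zero_iff]
    constructor <;> [positivity; linarith [(by linarith : θ / 8 < 1)]]
  rw [this]; push_cast; ring

lemma tmod_eq_sub_eight {θ : ℝ} (h0 : 8 ≤ θ) (h8 : θ < 16) : tmod θ = θ - 8 := by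
  unfold tmod
  have : ⌊θ / 8⌋ = 1 := by
    apply Int.floor_eq_iff.mpr
    constructor <;> push_cast <;> linarith
  rw [this]; push_cast; ring

/-- Cosine addition formula when α is in quadrant II and β in quadrant III. -/
theorem taxicab_cos_add_II_III (α β : ℝ) (hα : α ∈ Set.Ico (2 : ℝ) 4)
    (hβ : β ∈ Set.Ico (4 : ℝ) 6) :
    tcos (α + β) = 1 - |tcos α - tcos β| := by
  obtain ⟨hα1, hα2⟩ := hα
  obtain ⟨hβ1, hβ2⟩ := hβ
  have ha : tcos α = 1 - α / 2 := by
    unfold tcos; rw [tmod_eq_self (by linarith) (by linarith), if_pos (by linarith)]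
  have hb : tcos β = -3 + β / 2 := by
    unfold tcos; rw [tmod_eq_self (by linarith) (by linarith), if_neg (by linarith)]
  rw [ha, hb]
  by_cases h : α + β < 8
  · have hc : tcos (α + β) = -3 + (α + β) / 2 := by
      unfold tcos; rw [tmod_eq_self (by linarith) h, if_neg (by linarith)]
    rw [hc, abs_of_nonneg (by linarith)]; ring
  · push_neg at h
    have hc : tcos (α + β) = 1 - (α + β - 8) / 2 := by
      unfold tcos; rw [tmod_eq_sub_eight h (by linarith), if_pos (by linarith)]
    rw [hc, abs_of_nonpos (by linarith)]; ring
end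

section
/- For every taxicab angle α (taking values in [0,8) with the convention of 8-periodicity), the double angle formula cos_t(2α) = -1 + 2|cos_t α| holds. -/
/-- Taxicab double angle formula for cosine. -/
theorem taxicab_cos_double (α : ℝ) (hα : α ∈ Set.Ico (0 : ℝ) 8) :
    tcos (2 * α) = -1 + 2 * |tcos α| := by
  obtain ⟨h0, h8⟩ := hα
  have hfa : (⌊α / 8⌋ : ℤ) = 0 := by
    rw [Int.floor_eq_zero_iff]
    constructor
    · positivity
    · linarith
  by_cases h4 : α < 4
  · have hf2 : (⌊2 * α / 8⌋ : ℤ) = 0 := by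
      rw [Int.floor_eq_zero_iff]
      constructor
      · positivity
      · linarith
    simp only [tcos, tmod, hfa, hf2]
    push_cast
    by_cases h2 : α < 2
    · rw [if_pos (by linarith), if_pos (by linarith),
        abs_of_nonneg (by linarith)]
      ring
    · rw [if_neg (by push_neg at h2; linarith), if_pos (by linarith),
        abs_of_nonpos (by push_neg at h2; linarith)]
      ring
  · push_neg at h4
    have hf2 : (⌊2 * α / 8⌋ : ℤ) = 1 := by
      rw [Int.floor_eq_iff]
      constructor <;> push_cast <;> linarith
    simp only [tcos, tmod, hfa, hf2]
    push_cast
    by_cases h6 : α < 6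
    · rw [if_pos (by linarith), if_neg (by linarith),
        abs_of_nonpos (by linarith)]
      ring
    · push_neg at h6
      rw [if_neg (by linarith), if_neg (by linarith),
        abs_of_nonneg (by linarith)]
      ring
end

section
/- For every real α, the taxicab double angle formula sin_t(2α) = -1 + 2|cos_t(α - 1)| holds. -/
lemma tmod_eq_s11 (θ x : ℝ) (n : ℤ) (h : θ = x + 8 * n) (h0 : 0 ≤ x) (h1 : x < 8) :
    tmod θ = x := by
  have hf : ⌊θ / 8⌋ = n := by
    rw [Int.floor_eq_iff]
    constructor
    · rw [h]; push_cast; nlinarith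
    · rw [h]; push_cast; nlinarith
  unfold tmod
  rw [hf, h]; ring

/-- Taxicab double angle formula for sine. -/
theorem taxicab_sin_double (α : ℝ) :
    tsin (2 * α) = -1 + 2 * |tcos (α - 1)| := by
  set n : ℤ := ⌊(α - 1) / 8⌋ with hn
  set t : ℝ := α - 1 - 8 * n with htdef
  have hfl := Int.floor_le ((α - 1) / 8)
  have hfl2 := Int.lt_floor_add_one ((α - 1) / 8)
  have h0 : 0 ≤ t := by rw [htdef]; rw [hn]; nlinarith
  have h8 : t < 8 := by rw [htdef]; rw [hn]; nlinarith
  have hm1 : tmod (α - 1) = t := tmod_eq_s11 _ t n (by rw [htdef]; ring) h0 h8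
  have hα : α - 1 = t + 8 * n := by rw [htdef]; ring
  rw [tsin, tcos, hm1]
  rcases lt_or_ge t 3 with h3 | h3
  · have hm2 : tmod (2 * α) = 2 * t + 2 :=
      tmod_eq_s11 _ _ (2 * n) (by push_cast; nlinarith [hα]) (by linarith) (by linarith)
    rw [hm2]
    rcases lt_or_ge t 2 with h2 | h2
    · rw [if_neg (by linarith), if_pos (by linarith), if_pos (by linarith),
        abs_of_nonneg (by linarith)]
      ring
    · rw [if_neg (by linarith), if_neg (by linarith), if_pos (by linarith),
        abs_of_nonpos (by linarith)]
      ring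
  · rcases lt_or_ge t 7 with h7 | h7
    · have hm2 : tmod (2 * α) = 2 * t - 6 :=
        tmod_eq_s11 _ _ (2 * n + 1) (by push_cast; nlinarith [hα]) (by linarith) (by linarith)
      rw [hm2]
      rcases lt_or_ge t 4 with h4 | h4
      · rw [if_pos (by linarith), if_pos (by linarith), abs_of_nonpos (by linarith)]
        ring
      · rcases lt_or_ge t 6 with h6 | h6
        · rw [if_neg (by linarith), if_pos (by linarith), if_neg (by linarith),
            abs_of_nonpos (by linarith)]
          ring
        · rw [if_neg (by linarith), if_neg (by linarith), if_neg (by linarith),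
            abs_of_nonneg (by linarith)]
          ring
    · have hm2 : tmod (2 * α) = 2 * t - 14 :=
        tmod_eq_s11 _ _ (2 * n + 2) (by push_cast; nlinarith [hα]) (by linarith) (by linarith)
      rw [hm2]
      rw [if_pos (by linarith), if_neg (by linarith), abs_of_nonneg (by linarith)]
      ring
end

section
/- If α ∈ (0,2) (quadrant I) and β ∈ (6,8) (quadrant IV) are taxicab angles, then sin_t(α + β) = -1 + |sin_t α + cos_t β|. -/
/-- Sine addition formula when α is in quadrant I and β in quadrant IV. -/
theorem taxicab_sin_add_I_IV (α β : ℝ) (hα : α ∈ Set.Ioo (0 : ℝ) 2)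
    (hβ : β ∈ Set.Ioo (6 : ℝ) 8) :
    tsin (α + β) = -1 + |tsin α + tcos β| := by
  obtain ⟨ha1, ha2⟩ := hα
  obtain ⟨hb1, hb2⟩ := hβ
  have hfa : ⌊α / 8⌋ = 0 := by
    apply Int.floor_eq_zero_iff.2; constructor <;> nlinarith
  have hfb : ⌊β / 8⌋ = 0 := by
    apply Int.floor_eq_zero_iff.2; constructor <;> nlinarith
  have hma : tmod α = α := by simp [tmod, hfa]
  have hmb : tmod β = β := by simp [tmod, hfb]
  have hsa : tsin α = α / 2 := by
    rw [tsin, hma, if_pos (by linarith)]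
  have hcb : tcos β = -3 + β / 2 := by
    rw [tcos, hmb, if_neg (by linarith)]
  have habs : |tsin α + tcos β| = α / 2 + β / 2 - 3 := by
    rw [hsa, hcb, abs_of_nonneg (by linarith)]; ring
  rw [habs]
  by_cases h8 : α + β < 8
  · have hf : ⌊(α + β) / 8⌋ = 0 := by
      apply Int.floor_eq_zero_iff.2; constructor <;> nlinarith
    have hm : tmod (α + β) = α + β := by simp [tmod, hf]
    rw [tsin, hm, if_neg (by linarith), if_neg (by linarith)]; ring
  · have hf : ⌊(α + β) / 8⌋ = 1 := by
      rw [Int.floor_eq_iff]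
      push_cast; constructor <;> nlinarith
    have hm : tmod (α + β) = α + β - 8 := by simp [tmod, hf]
    rw [tsin, hm, if_pos (by linarith)]; ring
end

section
/- The map θ ↦ (cos_t θ, sin_t θ) is a bijection from [0,8) onto the taxicab unit circle {(x,y) ∈ ℝ² : |x| + |y| = 1}. -/
/-- θ ↦ (cos_t θ, sin_t θ) is a bijection from [0,8) onto the taxicab unit circle. -/
theorem taxicab_parametrization_bijective :
    Set.BijOn (fun θ : ℝ => (tcos θ, tsin θ)) (Set.Ico 0 8)
      {p : ℝ × ℝ | |p.1| + |p.2| = 1} := by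
  refine ⟨?_, ?_, ?_⟩
  · rintro θ ⟨h0, h8⟩
    simp only [Set.mem_setOf_eq, tcos, tsin, tmod_eq_self h0 h8]
    by_cases h2 : θ < 2
    · rw [if_pos (by linarith : θ < 4), if_pos h2,
        abs_of_nonneg (by linarith : (0:ℝ) ≤ 1 - θ/2),
        abs_of_nonneg (by linarith : (0:ℝ) ≤ θ/2)]
      ring
    · by_cases h4 : θ < 4
      · rw [if_pos h4, if_neg h2, if_pos (by linarith : θ < 6),
          abs_of_nonpos (by linarith : (1 - θ/2 : ℝ) ≤ 0),
          abs_of_nonneg (by linarith : (0:ℝ) ≤ 2 - θ/2)]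
        ring
      · by_cases h6 : θ < 6
        · rw [if_neg h4, if_neg h2, if_pos h6,
            abs_of_nonpos (by linarith : (-3 + θ/2 : ℝ) ≤ 0),
            abs_of_nonpos (by linarith : (2 - θ/2 : ℝ) ≤ 0)]
          ring
        · rw [if_neg h4, if_neg h2, if_neg h6,
            abs_of_nonneg (by linarith : (0:ℝ) ≤ -3 + θ/2),
            abs_of_nonpos (by linarith : (-4 + θ/2 : ℝ) ≤ 0)]
          ring
  · rintro a ⟨ha0, ha8⟩ b ⟨hb0, hb8⟩ h
    simp only [Prod.mk.injEq, tcos, tsin, tmod_eq_self ha0 ha8,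
      tmod_eq_self hb0 hb8] at h
    obtain ⟨h1, h2⟩ := h
    split_ifs at h1 h2 <;> linarith
  · rintro ⟨x, y⟩ hp
    simp only [Set.mem_setOf_eq] at hp
    have hx1 : -1 ≤ x := by rcases abs_cases x with ⟨e,_⟩|⟨e,_⟩ <;> rcases abs_cases y with ⟨f,_⟩|⟨f,_⟩ <;> linarith
    have hx2 : x ≤ 1 := by rcases abs_cases x with ⟨e,_⟩|⟨e,_⟩ <;> rcases abs_cases y with ⟨f,_⟩|⟨f,_⟩ <;> linarith
    by_cases hy : 0 ≤ y
    · rw [abs_of_nonneg hy] at hp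
      refine ⟨2 - 2*x, ⟨by linarith, by linarith⟩, ?_⟩
      simp only [Set.mem_setOf_eq, Prod.mk.injEq, tcos, tsin,
        tmod_eq_self (by linarith) (by linarith : (2 - 2*x : ℝ) < 8)]
      constructor
      · split_ifs with h <;> rcases abs_cases x with ⟨e,_⟩|⟨e,_⟩ <;> linarith
      · split_ifs with h1 h2 <;> rcases abs_cases x with ⟨e,_⟩|⟨e,_⟩ <;> linarith
    · rw [abs_of_neg (show y < 0 by linarith)] at hp
      have hxlt : x < 1 := by rcases abs_cases x with ⟨e,_⟩|⟨e,_⟩ <;> linarith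
      refine ⟨6 + 2*x, ⟨by linarith, by linarith⟩, ?_⟩
      simp only [Set.mem_setOf_eq, Prod.mk.injEq, tcos, tsin,
        tmod_eq_self (by linarith) (by linarith : (6 + 2*x : ℝ) < 8)]
      constructor
      · split_ifs with h <;> rcases abs_cases x with ⟨e,_⟩|⟨e,_⟩ <;> linarith
      · split_ifs with h1 h2 <;> rcases abs_cases x with ⟨e,_⟩|⟨e,_⟩ <;> linarith
end

section
/- SSS congruence fails in taxicab geometry: the triangle with vertices (0,0), (0.5,1.5), (1.5,0.5) and the triangle with vertices (0,0), (2,0), (1,-1) both have all three sides of taxicab length 2, yet the first has taxicab angles 1, 1.5, 1.5 while the second has taxicab angles 1, 1, 2, so corresponding angles are not all congruent. -/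
/-- Taxicab distance on ℝ². -/
def tdist (p q : ℝ × ℝ) : ℝ := |q.1 - p.1| + |q.2 - p.2|

/-- Projection of a nonzero vector onto the taxicab unit circle. -/
noncomputable def tdir (v : ℝ × ℝ) : ℝ × ℝ :=
  (v.1 / (|v.1| + |v.2|), v.2 / (|v.1| + |v.2|))

/-- `TAngle v w m` : the taxicab measure of the angle between rays in
directions `v` and `w` is `m`, i.e. the (shorter) taxicab arc length on the
unit circle between the corresponding points, computed from their angle
parameters. -/
noncomputable def TAngle (v w : ℝ × ℝ) (m : ℝ) : Prop :=
  ∃ a b : ℝ, a ∈ Set.Ico (0 : ℝ) 8 ∧ b ∈ Set.Ico (0 : ℝ) 8 ∧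
    tdir v = (tcos a, tsin a) ∧ tdir w = (tcos b, tsin b) ∧
    m = min |a - b| (8 - |a - b|)

lemma tmod_eq_s15 {x : ℝ} (h1 : 0 ≤ x) (h2 : x < 8) : tmod x = x := by
  unfold tmod
  have : ⌊x / 8⌋ = 0 := by
    rw [Int.floor_eq_zero_iff]
    constructor <;> [positivity; linarith]
  rw [this]; simp

lemma tcos_eq {x : ℝ} (h1 : 0 ≤ x) (h2 : x < 8) :
    tcos x = if x < 4 then 1 - x / 2 else -3 + x / 2 := by
  unfold tcos; rw [tmod_eq_s15 h1 h2]

lemma tsin_eq {x : ℝ} (h1 : 0 ≤ x) (h2 : x < 8) :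
    tsin x = if x < 2 then x / 2 else if x < 6 then 2 - x / 2 else -4 + x / 2 := by
  unfold tsin; rw [tmod_eq_s15 h1 h2]

/-- SSS congruence fails in taxicab geometry: the triangles
(0,0),(0.5,1.5),(1.5,0.5) and (0,0),(2,0),(1,-1) both have all sides of
taxicab length 2, but the first has taxicab angles 1, 1.5, 1.5 and the second
has taxicab angles 1, 1, 2. -/
theorem taxicab_SSS_fails :
    tdist (0, 0) (0.5, 1.5) = 2 ∧ tdist (0, 0) (1.5, 0.5) = 2 ∧
    tdist (0.5, 1.5) (1.5, 0.5) = 2 ∧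
    tdist (0, 0) (2, 0) = 2 ∧ tdist (0, 0) (1, -1) = 2 ∧
    tdist (2, 0) (1, -1) = 2 ∧
    TAngle ((0.5, 1.5) - (0, 0)) ((1.5, 0.5) - (0, 0)) 1 ∧
    TAngle ((0, 0) - (0.5, 1.5)) ((1.5, 0.5) - (0.5, 1.5)) 1.5 ∧
    TAngle ((0, 0) - (1.5, 0.5)) ((0.5, 1.5) - (1.5, 0.5)) 1.5 ∧
    TAngle ((2, 0) - (0, 0)) ((1, -1) - (0, 0)) 1 ∧
    TAngle ((0, 0) - (2, 0)) ((1, -1) - (2, 0)) 1 ∧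
    TAngle ((0, 0) - (1, -1)) ((2, 0) - (1, -1)) 2 ∧
    ({1, 1.5, 1.5} : Multiset ℝ) ≠ ({1, 1, 2} : Multiset ℝ) := by

  refine ⟨?_, ?_, ?_, ?_, ?_, ?_,
    ⟨1.5, 0.5, ?_, ?_, ?_, ?_, ?_⟩, ⟨5.5, 7, ?_, ?_, ?_, ?_, ?_⟩,
    ⟨4.5, 3, ?_, ?_, ?_, ?_, ?_⟩, ⟨0, 7, ?_, ?_, ?_, ?_, ?_⟩,
    ⟨4, 5, ?_, ?_, ?_, ?_, ?_⟩, ⟨3, 1, ?_, ?_, ?_, ?_, ?_⟩, ?_⟩ <;>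
    first
    | (constructor <;> norm_num) <;> done
    | (norm_num [tdist, abs_eq_max_neg, max_def]) <;> done
    | (rw [tcos_eq (by norm_num) (by norm_num), tsin_eq (by norm_num) (by norm_num)]
       simp [tdir, Prod.ext_iff]
       (try norm_num [abs_eq_max_neg, max_def])) <;> done
    | (rw [show |(0:ℝ) - 7| = 7 by norm_num]; norm_num) <;> done
    | (intro h
       have h15 : (1.5:ℝ) ∈ ({1, 1, 2} : Multiset ℝ) := by rw [← h]; simp
       norm_num at h15)
end
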